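/- arXiv:2501.18976 — 2 statements merged into one kernel-verified Lean document; each statement's English description precedes it below -/
import Mathlib

section
/- Let (𝒦,r) ∈ {(𝒦_□,r_□), (𝒦_△,r_△)}. Let D be a droplet, let y ∈ D and let x ∈ ℤ² be a neighbour of y (i.e. x ≠ y and x − y ∈ 𝒦). Let D' be the smallest droplet (with respect to inclusion) containing D ∪ {x}. Then [D ∪ {x}] = D'. -/
open Set MeasureTheory Filter
open scoped RealInnerProductSpace Pointwise ENNReal

noncomputable section

/-- The Euclidean plane. -/
abbrev E : Type := EuclideanSpace ℝ (Fin 2)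

/-- The point of the plane with coordinates `(a, b)`. -/
def pt (a b : ℝ) : E := (WithLp.equiv 2 (Fin 2 → ℝ)).symm ![a, b]

/-- The integer lattice `ℤ²` viewed inside the plane. -/
def latt : Set E := {x : E | ∃ a b : ℤ, x = pt a b}

/-- One step of threshold bootstrap percolation on `ℤ²` with neighbourhood `𝒦` and threshold `r`. -/
def step (𝒦 : Set E) (r : ℕ) (A : Set E) : Set E :=
  A ∪ {x : E | x ∈ latt ∧ r ≤ (((fun k => x + k) '' 𝒦) ∩ A).ncard}

/-- The bootstrap percolation closure `[A]` (of the lattice points of `A`). -/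
def bpCl (𝒦 : Set E) (r : ℕ) (A : Set E) : Set E :=
  ⋃ t : ℕ, (step 𝒦 r)^[t] (A ∩ latt)

/-- One step of the bootstrap percolation dynamics restricted to the region `B`. -/
def stepIn (𝒦 : Set E) (r : ℕ) (B A : Set E) : Set E :=
  A ∪ {x : E | x ∈ B ∩ latt ∧ r ≤ (((fun k => x + k) '' 𝒦) ∩ A).ncard}

/-- The closure `[A]_B` of `A` under the dynamics restricted to `B`. -/
def bpClIn (𝒦 : Set E) (r : ℕ) (B A : Set E) : Set E :=
  ⋃ t : ℕ, (stepIn 𝒦 r B)^[t] (A ∩ latt)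

/-- Rotation of the plane by `π/2` around the origin. -/
def rot (x : E) : E := pt (-(x 1)) (x 0)

/-- A "nice" set `K`: convex, invariant under rotation by `π/2` about the origin,
with `max {‖k‖ : k ∈ K} = 1`. -/
structure NiceK (K : Set E) : Prop where
  convex : Convex ℝ K
  rotInv : ∀ x ∈ K, rot x ∈ K
  normMax : IsGreatest ((fun k : E => ‖k‖) '' K) 1

/-- The neighbourhood `𝒦_s = (sK) ∩ ℤ²`. -/
def Ks (K : Set E) (s : ℝ) : Set E := (s • K) ∩ latt

/-- The threshold `r_s = 1 + min_{u ≠ 0} |{x ∈ 𝒦_s : ⟨x,u⟩ < 0}|`. -/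
def rKs (K : Set E) (s : ℝ) : ℕ :=
  1 + sInf ((fun u : E => {x : E | x ∈ Ks K s ∧ (inner ℝ x u : ℝ) < 0}.ncard) '' {u : E | u ≠ 0})

/-- The neighbourhood `𝒦_□` of the two-neighbour model. -/
def Ksq : Set E := {pt 0 0, pt 1 0, pt (-1) 0, pt 0 1, pt 0 (-1)}

/-- The neighbourhood `𝒦_△` of the three-neighbour model on the triangular lattice. -/
def Ktri : Set E := Ksq ∪ {pt 1 (-1), pt (-1) 1}

/-- The set `𝒮` of stable directions of the model `(𝒦, r)`. -/
def stableDirs (𝒦 : Set E) (r : ℕ) : Set E :=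
  {u : E | ‖u‖ = 1 ∧ {x : E | x ∈ 𝒦 ∧ (inner ℝ x u : ℝ) < 0}.ncard < r}

/-- The box `Λ_t = [-t,t]² ∩ ℤ²`. -/
def lam (t : ℝ) : Set E := {x ∈ latt | |x 0| ≤ t ∧ |x 1| ≤ t}

/-- A set `V` is `κ`-connected if any two of its points are joined by a finite
sequence of points of `V` with consecutive points at distance at most `κ`. -/
def ConnectedWithin (κ : ℝ) (V : Set E) : Prop :=
  ∀ x ∈ V, ∀ y ∈ V, ∃ (k : ℕ) (f : ℕ → E), f 0 = x ∧ f k = y ∧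
    (∀ i ≤ k, f i ∈ V) ∧ ∀ i < k, dist (f i) (f (i + 1)) ≤ κ

/-- `A` contains a `κ`-connected set of `14` sites. -/
def HasConn14 (κ : ℝ) (A : Set E) : Prop :=
  ∃ V ⊆ A, ConnectedWithin κ V ∧ V.ncard = 14

/-- Projection of a set of lattice points of the plane to the torus `(ℤ/nℤ)²`. -/
def torSet (n : ℕ) (S : Set E) : Set (ZMod n × ZMod n) :=
  {p | ∃ a b : ℤ, pt a b ∈ S ∧ p = ((a : ZMod n), (b : ZMod n))}

/-- One step of bootstrap percolation on the torus `(ℤ/nℤ)²`. -/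
def stepT (n : ℕ) (𝒦 : Set E) (r : ℕ) (A : Set (ZMod n × ZMod n)) : Set (ZMod n × ZMod n) :=
  A ∪ {x | r ≤ (((fun k => x + k) '' torSet n 𝒦) ∩ A).ncard}

/-- The bootstrap percolation closure on the torus `(ℤ/nℤ)²`. -/
def bpClT (n : ℕ) (𝒦 : Set E) (r : ℕ) (A : Set (ZMod n × ZMod n)) : Set (ZMod n × ZMod n) :=
  ⋃ t : ℕ, (stepT n 𝒦 r)^[t] A

/-- The set `A(t)` of the first `t` sites of the torus in the order given by `σ`. -/
def Aset (n : ℕ) (σ : (ZMod n × ZMod n) ≃ Fin (n ^ 2)) (t : ℕ) : Set (ZMod n × ZMod n) :=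
  {x | (σ x : ℕ) + 1 ≤ t}

/-- The percolation time `τ`. -/
def percTime (n : ℕ) (𝒦 : Set E) (r : ℕ) (σ : (ZMod n × ZMod n) ≃ Fin (n ^ 2)) : ℕ :=
  sInf {t : ℕ | bpClT n 𝒦 r (Aset n σ t) = univ}

/-- The probability (over a uniformly random bijection `σ : 𝕋 → {1,…,n²}`) that
`|[A(τ-1)]| ≥ τ (1 + C / log n)`. -/
def probBad (𝒦 : Set E) (r : ℕ) (C : ℝ) (n : ℕ) : ℝ :=
  ({σ : (ZMod n × ZMod n) ≃ Fin (n ^ 2) |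
      (percTime n 𝒦 r σ : ℝ) * (1 + C / Real.log n) ≤
        ((bpClT n 𝒦 r (Aset n σ (percTime n 𝒦 r σ - 1))).ncard : ℝ)}.ncard : ℝ) /
    (Nat.card ((ZMod n × ZMod n) ≃ Fin (n ^ 2)) : ℝ)

/-- The rectangle with corner `x`, side of length `len` in direction `rot u`
(perpendicular to `u`) and side of length `wid` in direction `u`. -/
def rectDir (x u : E) (len wid : ℝ) : Set E :=
  {y : E | ∃ a b : ℝ, a ∈ Icc (0 : ℝ) len ∧ b ∈ Icc (0 : ℝ) wid ∧ y = x + a • rot u + b • u}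

/-- The axis-parallel square `[a, a+c] × [b, b+c]`. -/
def axSquare (a b c : ℝ) : Set E := {x : E | x 0 ∈ Icc a (a + c) ∧ x 1 ∈ Icc b (b + c)}

/-- Droplets for the family `S` of stable directions: `D = ℤ² ∩ ⋂_{u ∈ S} {⟨·,u⟩ ≤ l_u}`. -/
def IsDropletS (S : Set E) (D : Set E) : Prop :=
  ∃ l : E → ℝ, D = latt ∩ ⋂ u ∈ S, {x : E | (inner ℝ x u : ℝ) ≤ l u}

/-- The stable directions `𝒮_□` of the two-neighbour model. -/
def Ssq : Set E := {pt 1 0, pt (-1) 0, pt 0 1, pt 0 (-1)}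

/-- The stable directions `𝒮_△` of the triangular three-neighbour model. -/
def Stri : Set E :=
  Ssq ∪ {pt ((Real.sqrt 2)⁻¹) ((Real.sqrt 2)⁻¹), pt (-(Real.sqrt 2)⁻¹) (-(Real.sqrt 2)⁻¹)}

/-- A valid choice of infection sets `𝒦_v ⊆ A_t ∩ (𝒦 + v)` of size `r`, one for each
newly infected vertex `v`. -/
def IsInfChoice (𝒦 : Set E) (r : ℕ) (A : Set E) (κ : E → Set E) : Prop :=
  ∀ t : ℕ, ∀ v ∈ (step 𝒦 r)^[t + 1] (A ∩ latt) \ (step 𝒦 r)^[t] (A ∩ latt),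
    κ v ⊆ (step 𝒦 r)^[t] (A ∩ latt) ∩ ((fun k => v + k) '' 𝒦) ∧ (κ v).ncard = r

/-- The out-degree of `u` in the infection graph determined by the choice `κ`. -/
def outDeg (𝒦 : Set E) (r : ℕ) (A : Set E) (κ : E → Set E) (u : E) : ℕ :=
  {v : E | (∃ t : ℕ, v ∈ (step 𝒦 r)^[t + 1] (A ∩ latt) \ (step 𝒦 r)^[t] (A ∩ latt)) ∧
    u ∈ κ v}.ncard

/-- A vertex of `[A]` is good if its out-degree in the infection graph is at least `0.9 r`. -/
def IsGood (𝒦 : Set E) (r : ℕ) (A : Set E) (κ : E → Set E) (u : E) : Prop :=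
  u ∈ bpCl 𝒦 r A ∧ (0.9 : ℝ) * r ≤ (outDeg 𝒦 r A κ u : ℝ)

/-- A fat convex set: bounded, convex, and all vertical and horizontal chords have
length at least `c`. -/
def IsFat (c : ℝ) (P : Set E) : Prop :=
  Convex ℝ P ∧ Bornology.IsBounded P ∧
  (∀ a : ℝ, (P ∩ {p : E | p 0 = a}).Nonempty → c ≤ Metric.diam (P ∩ {p : E | p 0 = a})) ∧
  (∀ b : ℝ, (P ∩ {p : E | p 1 = b}).Nonempty → c ≤ Metric.diam (P ∩ {p : E | p 1 = b}))

def xmin (P : Set E) : ℝ := sInf ((fun p : E => p 0) '' P)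
def xmax (P : Set E) : ℝ := sSup ((fun p : E => p 0) '' P)
def ymin (P : Set E) : ℝ := sInf ((fun p : E => p 1) '' P)
def ymax (P : Set E) : ℝ := sSup ((fun p : E => p 1) '' P)

/-- A convex set is horizontal if its horizontal extent is at least its vertical extent. -/
def IsHorizontal (P : Set E) : Prop := ymax P - ymin P ≤ xmax P - xmin P

/-- The upper boundary function of `P`. -/
def upperF (P : Set E) (a : ℝ) : ℝ := sSup {y : ℝ | pt a y ∈ P}

/-- The lower boundary function of `P`. -/
def lowerF (P : Set E) (a : ℝ) : ℝ := sInf {y : ℝ | pt a y ∈ P}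

/-- Slopes of tangent (supporting) lines to the upper boundary of `P` at abscissa `a`. -/
def upperSlopes (P : Set E) (a : ℝ) : Set ℝ :=
  {m : ℝ | ∀ t : ℝ, {y : ℝ | pt t y ∈ P}.Nonempty → upperF P t ≤ upperF P a + m * (t - a)}

/-- Slopes of tangent (supporting) lines to the lower boundary of `P` at abscissa `a`. -/
def lowerSlopes (P : Set E) (a : ℝ) : Set ℝ :=
  {m : ℝ | ∀ t : ℝ, {y : ℝ | pt t y ∈ P}.Nonempty → lowerF P a + m * (t - a) ≤ lowerF P t}

/-- The vertical chord `P_{1,a}` is admissible: the tangent angles at the chord are in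
`[-4π/9, 4π/9]` and the tangent slopes barely change at horizontal distance `C₄ s`. -/
def IsAdmissible (C₃ C₄ s : ℝ) (P : Set E) (a : ℝ) : Prop :=
  xmin P + C₄ * s < a ∧ a < xmax P - C₄ * s ∧ (∃ y : ℝ, pt a y ∈ P) ∧
  (∀ m ∈ upperSlopes P a, |Real.arctan m| ≤ 4 * Real.pi / 9) ∧
  (∀ m ∈ lowerSlopes P a, |Real.arctan m| ≤ 4 * Real.pi / 9) ∧
  (∀ m₁ ∈ upperSlopes P (a - C₄ * s), ∀ m₂ ∈ upperSlopes P (a + C₄ * s),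
    Real.arctan m₁ - Real.arctan m₂ ≤ 1 / C₃) ∧
  (∀ m₁ ∈ lowerSlopes P (a - C₄ * s), ∀ m₂ ∈ lowerSlopes P (a + C₄ * s),
    Real.arctan m₂ - Real.arctan m₁ ≤ 1 / C₃)

/-- The set `𝒬` of quasi-stable directions. -/
def quasiStable (s : ℝ) : Set E :=
  {u : E | ‖u‖ = 1 ∧ ∃ a b : ℤ, |(a : ℝ)| ≤ s ∧ |(b : ℝ)| ≤ s ∧ pt a b ≠ 0 ∧
    ∃ c : ℝ, pt a b = c • u}

/-- The (possibly improper) half-plane `{⟨·,u⟩ ≤ l}` for `l ∈ ℝ ∪ {±∞}`. -/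
def ehs (u : E) (l : EReal) : Set E := {x : E | (((inner ℝ x u : ℝ) : ℝ) : EReal) ≤ l}

/-- The droplet with radii `l : E → EReal` (indexed by the quasi-stable directions). -/
def dropletOf (s : ℝ) (l : E → EReal) : Set E := ⋂ u ∈ quasiStable s, ehs u (l u)

/-- `D` is a droplet for the quasi-stable directions. -/
def IsDropletQ (s : ℝ) (D : Set E) : Prop := ∃ l : E → EReal, D = dropletOf s l

/-- The tight radius of `D` in direction `u`. -/
def tight (D : Set E) (u : E) : EReal := sSup ((fun x : E => (((inner ℝ x u : ℝ) : ℝ) : EReal)) '' D)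

/-- The `u`-side of a droplet `D`. -/
def uside (u : E) (D : Set E) : Set E := {x ∈ D | ∀ y ∈ D, (inner ℝ y u : ℝ) ≤ (inner ℝ x u : ℝ)}

/-- A non-degenerate droplet: each `u`-side has length at least `C^{1/3}` for unstable
`u ∈ 𝒬` and at least `C^{1/2}` for stable `u ∈ 𝒬`. -/
def IsNondeg (s C : ℝ) (𝒦 : Set E) (r : ℕ) (D : Set E) : Prop :=
  IsDropletQ s D ∧ ∀ u ∈ quasiStable s,
    (u ∉ stableDirs 𝒦 r → C ^ ((1 : ℝ) / 3) ≤ Metric.diam (uside u D)) ∧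
    (u ∈ stableDirs 𝒦 r → C ^ ((1 : ℝ) / 2) ≤ Metric.diam (uside u D))

/-- The droplet obtained from `D` by replacing its tight radius in direction `v` by `m`. -/
def extDroplet (s : ℝ) (v : E) (D : Set E) (m : EReal) : Set E :=
  (⋂ u ∈ quasiStable s \ {v}, ehs u (tight D u)) ∩ ehs v m

/-- `D'` is the `v`-extension of the droplet `D`. -/
def IsExtension (s : ℝ) (v : E) (D D' : Set E) : Prop :=
  ∃ l' : EReal, tight D v < l' ∧ D' = extDroplet s v D l' ∧
    ((D' \ D) ∩ latt).Nonempty ∧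
    ∀ m : EReal, tight D v < m → ((extDroplet s v D m \ D) ∩ latt).Nonempty → l' ≤ m

/-- Rotation of the plane by the angle `θ`. -/
def rotA (θ : ℝ) (u : E) : E :=
  pt (Real.cos θ * u 0 - Real.sin θ * u 1) (Real.sin θ * u 0 + Real.cos θ * u 1)

/-- The closed half-plane `H̄_u(l)`. -/
def hs (u : E) (l : ℝ) : Set E := {x : E | (inner ℝ x u : ℝ) ≤ l}

/-- The open half-plane `ℍ_u(l)`. -/
def hso (u : E) (l : ℝ) : Set E := {x : E | (inner ℝ x u : ℝ) < l}

/-- Translate of a set. -/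
def transl (x : E) (S : Set E) : Set E := (fun y => x + y) '' S

/-- The rectangle `x + (H̄_u ∩ H̄_{u+π/2} ∩ H̄_{u+π}(wid) ∩ H̄_{u-π/2}(len))`. -/
def rectHS (x u : E) (wid len : ℝ) : Set E :=
  transl x (hs u 0 ∩ hs (rotA (Real.pi / 2) u) 0 ∩ hs (rotA Real.pi u) wid ∩
    hs (rotA (-(Real.pi / 2)) u) len)

end


/-!
Droplets are handled in `ℤ²`, where a droplet is a polygon `{z | ⟪c i, z⟫ ≤ u i}` whose outer
normals `c i` are integer vectors in the stable directions.

A droplet `D'` is closed under the dynamics: a site outside the half-plane `⟪c, ·⟫ ≤ u` can only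
see the droplet through neighbour offsets `n` with `⟪c, n⟫ < 0`, and there are fewer than `r` of
those. Hence `[D ∪ {x}] ⊆ D'`.

Conversely, once the radii `u` of `D` are tight, the droplet with radii `max (u i) ⟪c i, x⟫`
contains `D ∪ {x}`, so it contains `D'`, and it lies in `[D ∪ {x}]`: the sites it adds form a
column through `x` and, in the triangular model, an antidiagonal through `x`, and they are infected
one after another going outwards from `x`, each seeing its predecessor and `r - 1` sites of `D`.
Each model is invariant under a rotation of `ℤ²` permuting its neighbours and its normals
cyclically, so only `x - y = (1, 0)` has to be treated.
-/

section Bootstrap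

variable {G : Type*} [AddCommGroup G] (N : Set G) (r : ℕ)

def bootstrapStep (A : Set G) : Set G := A ∪ {z | r ≤ {n ∈ N | z + n ∈ A}.ncard}

def bootstrapClosure (A : Set G) : Set G := ⋃ t : ℕ, (bootstrapStep N r)^[t] A

variable {N r}

lemma bootstrapStep_mono (hN : N.Finite) : Monotone (bootstrapStep N r) := by
  intro A B hAB
  refine union_subset_union hAB fun z (hz : r ≤ _) => hz.trans ?_
  exact ncard_le_ncard (fun n hn => ⟨hn.1, hAB hn.2⟩) (hN.subset fun n hn => hn.1)

lemma subset_bootstrapClosure (A : Set G) : A ⊆ bootstrapClosure N r A :=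
  subset_iUnion_of_subset 0 subset_rfl

lemma bootstrapClosure_subset (hN : N.Finite) {A B : Set G} (hB : bootstrapStep N r B ⊆ B)
    (hAB : A ⊆ B) : bootstrapClosure N r A ⊆ B := by
  refine iUnion_subset fun t => ?_
  induction t with
  | zero => exact hAB
  | succ t ih => exact Function.iterate_succ_apply' .. ▸ (bootstrapStep_mono hN ih).trans hB

lemma mem_bootstrapClosure_of_le_ncard (hN : N.Finite) {A : Set G} {z : G}
    (h : r ≤ {n ∈ N | z + n ∈ bootstrapClosure N r A}.ncard) : z ∈ bootstrapClosure N r A := by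
  set S := {n ∈ N | z + n ∈ bootstrapClosure N r A}
  have hS : S.Finite := hN.subset fun n hn => hn.1
  have hdir : Directed (· ⊆ ·) fun t => (bootstrapStep N r)^[t] A :=
    (monotone_nat_of_le_succ fun t => by
      rw [Function.iterate_succ_apply']; exact subset_union_left).directed_le
  obtain ⟨t, ht⟩ := hdir.exists_mem_subset_of_finset_subset_biUnion
    (s := (hS.image (z + ·)).toFinset) (by
      rw [Finite.coe_toFinset]; rintro _ ⟨n, hn, rfl⟩; exact hn.2)
  refine mem_iUnion.2 ⟨t + 1, ?_⟩
  rw [Function.iterate_succ_apply']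
  refine Or.inr (h.trans (ncard_le_ncard (fun n hn => ⟨hn.1, ?_⟩) (hN.subset fun n hn => hn.1)))
  exact ht (by rw [Finite.coe_toFinset]; exact mem_image_of_mem _ hn)

lemma add_nsmul_mem_bootstrapClosure [DecidableEq G] (hN : N.Finite) {A : Set G}
    {T : Finset G} {p d : G} (hT : ↑(insert (-d) T) ⊆ N) (hdT : -d ∉ T) (hr : r ≤ T.card + 1)
    (hp : p ∈ bootstrapClosure N r A) {m : ℕ}
    (hside : ∀ j < m, ∀ n ∈ T, p + (j + 1) • d + n ∈ A) :
    p + m • d ∈ bootstrapClosure N r A := by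
  induction m with
  | zero => simpa using hp
  | succ m ih =>
    refine mem_bootstrapClosure_of_le_ncard hN (hr.trans ?_)
    rw [← Finset.card_insert_of_notMem hdT, ← ncard_coe_finset]
    refine ncard_le_ncard (fun n hn => ⟨hT hn, ?_⟩) (hN.subset fun n hn => hn.1)
    obtain rfl | hn := Finset.mem_insert.1 hn
    · simpa [add_nsmul, add_assoc] using ih fun j hj => hside j (by omega)
    · exact subset_bootstrapClosure A (hside m (by omega) n hn)

lemma image_bootstrapClosure {g : G ≃+ G} (hg : ∀ n, g n ∈ N ↔ n ∈ N) (A : Set G) :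
    g '' bootstrapClosure N r A = bootstrapClosure N r (g '' A) := by
  have hstep : ∀ B : Set G, g '' bootstrapStep N r B = bootstrapStep N r (g '' B) := by
    intro B
    have hcount : ∀ z, {n ∈ N | g z + n ∈ g '' B} = g '' {n ∈ N | z + n ∈ B} := by
      intro z
      ext n
      obtain ⟨n, rfl⟩ := g.surjective n
      simp [hg, ← map_add, g.injective.mem_set_image]
    ext w
    obtain ⟨z, rfl⟩ := g.surjective w
    simp only [bootstrapStep, image_union, mem_union, g.injective.mem_set_image, mem_ofPred_eq,
      hcount, ncard_image_of_injective _ g.injective]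
  simp only [bootstrapClosure, image_iUnion]
  refine iUnion_congr fun t => ?_
  induction t with
  | zero => rfl
  | succ t ih => rw [Function.iterate_succ_apply', Function.iterate_succ_apply', hstep, ih]

end Bootstrap

def dot (a b : ℤ × ℤ) : ℤ := a.1 * b.1 + a.2 * b.2

lemma dot_comm (a b : ℤ × ℤ) : dot a b = dot b a := by
  simp only [dot, mul_comm]

lemma dot_add_right (a b c : ℤ × ℤ) : dot a (b + c) = dot a b + dot a c := by
  simp only [dot, Prod.fst_add, Prod.snd_add]; ring

section Polygon

variable {ι : Type*} (c : ι → ℤ × ℤ)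

def polygon (u : ι → ℤ) : Set (ℤ × ℤ) := {z | ∀ i, dot (c i) z ≤ u i}

def IsTight (u : ι → ℤ) : Prop := ∀ i, ∃ z ∈ polygon c u, dot (c i) z = u i

def Grows (N : Set (ℤ × ℤ)) (r : ℕ) (k : ℤ × ℤ) : Prop :=
  ∀ u y, IsTight c u → y ∈ polygon c u →
    polygon c (fun i => max (u i) (dot (c i) (y + k))) ⊆
      bootstrapClosure N r (polygon c u ∪ {y + k})

variable {c}

lemma polygon_mono {u v : ι → ℤ} (h : ∀ i, u i ≤ v i) : polygon c u ⊆ polygon c v :=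
  fun _ hz i => (hz i).trans (h i)

lemma exists_isTight_polygon_eq {u : ι → ℤ} (h : (polygon c u).Nonempty) :
    ∃ v, IsTight c v ∧ polygon c v = polygon c u := by
  have hmax : ∀ i, ∃ m, (∃ z ∈ polygon c u, dot (c i) z = m) ∧
      ∀ m', (∃ z ∈ polygon c u, dot (c i) z = m') → m' ≤ m := fun i =>
    Int.exists_greatest_of_bdd ⟨u i, by rintro _ ⟨z, hz, rfl⟩; exact hz i⟩
      (let ⟨z, hz⟩ := h; ⟨_, z, hz, rfl⟩)
  choose v hv hvmax using hmax
  have hpoly : polygon c v = polygon c u := by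
    refine subset_antisymm (polygon_mono fun i => ?_) fun z hz i => hvmax i _ ⟨z, hz, rfl⟩
    obtain ⟨z, hz, hzv⟩ := hv i
    exact hzv ▸ hz i
  exact ⟨v, fun i => hpoly ▸ hv i, hpoly⟩

lemma bootstrapStep_polygon_subset {N : Set (ℤ × ℤ)} {r : ℕ}
    (hstable : ∀ i, {n ∈ N | dot (c i) n < 0}.ncard < r) (hN : N.Finite) (u : ι → ℤ) :
    bootstrapStep N r (polygon c u) ⊆ polygon c u := by
  rintro z (hz | hz)
  · exact hz
  by_contra hout
  obtain ⟨i, hi⟩ : ∃ i, u i < dot (c i) z := by simpa [polygon] using hout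
  refine (hstable i).not_ge (hz.trans (ncard_le_ncard ?_ (hN.subset fun n hn => hn.1)))
  rintro n ⟨hn, hzn⟩
  have := hzn i
  rw [dot_add_right] at this
  exact ⟨hn, by omega⟩

lemma grows_zero {N : Set (ℤ × ℤ)} {r : ℕ} : Grows c N r 0 := by
  intro u y _ hy
  rw [add_zero]
  exact (polygon_mono fun i => max_le le_rfl (hy i)).trans
    (subset_union_left.trans (subset_bootstrapClosure _))

variable {g : ℤ × ℤ ≃+ ℤ × ℤ} {σ : ι ≃ ι}

lemma dot_symm_apply (hg : ∀ i z, dot (c i) (g z) = dot (c (σ i)) z) (i : ι) (z : ℤ × ℤ) :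
    dot (c i) (g.symm z) = dot (c (σ.symm i)) z := by
  simpa using (hg (σ.symm i) (g.symm z)).symm

lemma apply_mem_polygon_iff (hg : ∀ i z, dot (c i) (g z) = dot (c (σ i)) z) (u : ι → ℤ)
    (z : ℤ × ℤ) : g z ∈ polygon c u ↔ z ∈ polygon c (u ∘ σ.symm) := by
  simp only [polygon, mem_ofPred_eq, hg, Function.comp_apply]
  exact ⟨fun h i => by simpa using h (σ.symm i), fun h i => by simpa using h (σ i)⟩

lemma Grows.map {N : Set (ℤ × ℤ)} {r : ℕ} (hg : ∀ i z, dot (c i) (g z) = dot (c (σ i)) z)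
    (hN : ∀ n, g n ∈ N ↔ n ∈ N) {k : ℤ × ℤ} (h : Grows c N r k) : Grows c N r (g k) := by
  intro u y hu hy z hz
  have hpoly : g '' polygon c (u ∘ σ.symm) = polygon c u := by
    ext w
    obtain ⟨w, rfl⟩ := g.surjective w
    rw [g.injective.mem_set_image, apply_mem_polygon_iff hg]
  have hy' : g.symm y ∈ polygon c (u ∘ σ.symm) := by
    rwa [← apply_mem_polygon_iff hg, g.apply_symm_apply]
  have hu' : IsTight c (u ∘ σ.symm) := by
    intro i
    obtain ⟨w, hw, hwi⟩ := hu (σ.symm i)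
    refine ⟨g.symm w, by rwa [← apply_mem_polygon_iff hg, g.apply_symm_apply], ?_⟩
    rwa [Function.comp_apply, dot_symm_apply hg]
  have key := image_mono (f := g) (h (u ∘ σ.symm) (g.symm y) hu' hy')
  rw [image_bootstrapClosure hN, image_union, hpoly, image_singleton, map_add,
    g.apply_symm_apply] at key
  refine key ⟨g.symm z, ?_, g.apply_symm_apply z⟩
  rw [← g.apply_symm_apply z, apply_mem_polygon_iff hg] at hz
  convert hz using 2
  funext i
  have e : y + g k = g (g.symm y + k) := by simp
  rw [e]
  simp only [Function.comp_apply, hg, σ.apply_symm_apply]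

lemma Grows.iterate {N : Set (ℤ × ℤ)} {r : ℕ}
    (hg : ∀ i z, dot (c i) (g z) = dot (c (σ i)) z) (hN : ∀ n, g n ∈ N ↔ n ∈ N)
    {k : ℤ × ℤ} (h : Grows c N r k) (j : ℕ) : Grows c N r (g^[j] k) := by
  induction j with
  | zero => exact h
  | succ j ih => exact Function.iterate_succ_apply' .. ▸ ih.map hg hN

end Polygon

lemma ncard_sep_finset {α : Type*} (s : Finset α) (p : α → Prop) [DecidablePred p] :
    {x ∈ (s : Set α) | p x}.ncard = (s.filter p).card := by
  rw [← ncard_coe_finset, Finset.coe_filter]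
  rfl

section Square

def nbhdSq : Finset (ℤ × ℤ) := {(0, 0), (1, 0), (-1, 0), (0, 1), (0, -1)}

def normalsSq : Fin 4 → ℤ × ℤ := ![(1, 0), (0, -1), (-1, 0), (0, 1)]

def rotSq : ℤ × ℤ ≃+ ℤ × ℤ where
  toFun z := (-z.2, z.1)
  invFun z := (z.2, -z.1)
  left_inv z := by simp
  right_inv z := by simp
  map_add' a b := by ext <;> simp [add_comm]

lemma mem_polygon_normalsSq {u : Fin 4 → ℤ} {z : ℤ × ℤ} :
    z ∈ polygon normalsSq u ↔ z.1 ≤ u 0 ∧ -z.2 ≤ u 1 ∧ -z.1 ≤ u 2 ∧ z.2 ≤ u 3 := by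
  simp [polygon, Fin.forall_fin_succ, dot, normalsSq]

lemma dot_normalsSq_rotSq (i : Fin 4) (z : ℤ × ℤ) :
    dot (normalsSq i) (rotSq z) = dot (normalsSq (Equiv.addRight 1 i)) z := by
  fin_cases i <;> simp [dot, normalsSq, rotSq]

lemma rotSq_mem_nbhdSq (n : ℤ × ℤ) : rotSq n ∈ nbhdSq ↔ n ∈ nbhdSq := by
  obtain ⟨a, b⟩ := n
  simp only [nbhdSq, rotSq, AddEquiv.coe_mk, Equiv.coe_fn_mk, Finset.mem_insert,
    Finset.mem_singleton, Prod.mk.injEq]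
  omega

lemma ncard_nbhdSq_neg (i : Fin 4) :
    {n ∈ (nbhdSq : Set (ℤ × ℤ)) | dot (normalsSq i) n < 0}.ncard < 2 := by
  rw [ncard_sep_finset]
  fin_cases i <;> decide

lemma grows_normalsSq_one_zero : Grows normalsSq nbhdSq 2 (1, 0) := by
  intro u y _ hy z hz
  simp only [mem_polygon_normalsSq] at hy hz
  simp only [normalsSq, dot, Matrix.cons_val, Prod.fst_add, Prod.snd_add, one_mul, zero_mul,
    neg_mul, add_zero, zero_add] at hz
  set A := polygon normalsSq u ∪ {y + (1, 0)}
  have hA : ∀ v : ℤ × ℤ, v.1 ≤ u 0 → -v.2 ≤ u 1 → -v.1 ≤ u 2 → v.2 ≤ u 3 → v ∈ A :=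
    fun v h₀ h₁ h₂ h₃ => Or.inl (mem_polygon_normalsSq.2 ⟨h₀, h₁, h₂, h₃⟩)
  have hx : y + (1, 0) ∈ bootstrapClosure nbhdSq 2 A := subset_bootstrapClosure A (Or.inr rfl)
  have hN : (nbhdSq : Set (ℤ × ℤ)).Finite := nbhdSq.finite_toSet
  by_cases hzD : z ∈ polygon normalsSq u
  · exact subset_bootstrapClosure A (Or.inl hzD)
  rw [mem_polygon_normalsSq] at hzD
  rcases le_or_gt z.2 y.2 with hle | hlt
  · have hline := add_nsmul_mem_bootstrapClosure hN (T := {(-1, 0)}) (d := (0, -1))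
      (by rw [Finset.coe_subset]; decide) (by decide) (by decide) hx (m := (y.2 - z.2).toNat)
      fun j _ n hn => by
        fin_cases hn
        apply hA <;> simp only [Prod.fst_add, Prod.snd_add, Prod.smul_mk, Int.nsmul_eq_mul] <;> omega
    convert hline using 1
    ext <;> simp only [Prod.fst_add, Prod.snd_add, Prod.smul_mk, Int.nsmul_eq_mul] <;> omega
  · have hline := add_nsmul_mem_bootstrapClosure hN (T := {(-1, 0)}) (d := (0, 1))
      (by rw [Finset.coe_subset]; decide) (by decide) (by decide) hx (m := (z.2 - y.2).toNat)
      fun j _ n hn => by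
        fin_cases hn
        apply hA <;> simp only [Prod.fst_add, Prod.snd_add, Prod.smul_mk, Int.nsmul_eq_mul] <;> omega
    convert hline using 1
    ext <;> simp only [Prod.fst_add, Prod.snd_add, Prod.smul_mk, Int.nsmul_eq_mul] <;> omega

lemma grows_of_mem_nbhdSq {k : ℤ × ℤ} (hk : k ∈ nbhdSq) : Grows normalsSq nbhdSq 2 k := by
  obtain rfl | hk0 := eq_or_ne k 0
  · exact grows_zero
  obtain ⟨j, -, rfl⟩ : ∃ j ∈ Finset.range 4, rotSq^[j] (1, 0) = k := by
    revert k; decide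
  exact grows_normalsSq_one_zero.iterate dot_normalsSq_rotSq rotSq_mem_nbhdSq j

end Square

section Triangular

def nbhdTri : Finset (ℤ × ℤ) := {(0, 0), (1, 0), (-1, 0), (0, 1), (0, -1), (1, -1), (-1, 1)}

def normalsTri : Fin 6 → ℤ × ℤ := ![(1, 0), (0, -1), (-1, -1), (-1, 0), (0, 1), (1, 1)]

def rotTri : ℤ × ℤ ≃+ ℤ × ℤ where
  toFun z := (-z.2, z.1 + z.2)
  invFun z := (z.1 + z.2, -z.1)
  left_inv z := by ext <;> simp
  right_inv z := by ext <;> simp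
  map_add' a b := by ext <;> simp only [Prod.fst_add, Prod.snd_add] <;> ring

lemma mem_polygon_normalsTri {u : Fin 6 → ℤ} {z : ℤ × ℤ} :
    z ∈ polygon normalsTri u ↔ z.1 ≤ u 0 ∧ -z.2 ≤ u 1 ∧ -z.1 - z.2 ≤ u 2 ∧ -z.1 ≤ u 3 ∧
      z.2 ≤ u 4 ∧ z.1 + z.2 ≤ u 5 := by
  simp [polygon, Fin.forall_fin_succ, dot, normalsTri]

lemma dot_normalsTri_rotTri (i : Fin 6) (z : ℤ × ℤ) :
    dot (normalsTri i) (rotTri z) = dot (normalsTri (Equiv.addRight 1 i)) z := by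
  fin_cases i <;> simp [dot, normalsTri, rotTri, add_comm]

lemma rotTri_mem_nbhdTri (n : ℤ × ℤ) : rotTri n ∈ nbhdTri ↔ n ∈ nbhdTri := by
  obtain ⟨a, b⟩ := n
  simp only [nbhdTri, rotTri, AddEquiv.coe_mk, Equiv.coe_fn_mk, Finset.mem_insert,
    Finset.mem_singleton, Prod.mk.injEq]
  omega

lemma ncard_nbhdTri_neg (i : Fin 6) :
    {n ∈ (nbhdTri : Set (ℤ × ℤ)) | dot (normalsTri i) n < 0}.ncard < 3 := by
  rw [ncard_sep_finset]
  fin_cases i <;> decide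

lemma grows_normalsTri_one_zero : Grows normalsTri nbhdTri 3 (1, 0) := by
  intro u y hu hy z hz
  -- tightness in these four directions keeps the sites next to the new lines inside the polygon
  obtain ⟨w₀, hw₀, e₀⟩ := hu 0
  obtain ⟨w₁, hw₁, e₁⟩ := hu 1
  obtain ⟨w₄, hw₄, e₄⟩ := hu 4
  obtain ⟨w₅, hw₅, e₅⟩ := hu 5
  simp only [mem_polygon_normalsTri] at hy hz hw₀ hw₁ hw₄ hw₅
  simp only [normalsTri, dot, Matrix.cons_val, Prod.fst_add, Prod.snd_add, one_mul, zero_mul,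
    neg_mul, add_zero, zero_add] at hz e₀ e₁ e₄ e₅
  set A := polygon normalsTri u ∪ {y + (1, 0)}
  have hA : ∀ v : ℤ × ℤ, v.1 ≤ u 0 → -v.2 ≤ u 1 → -v.1 - v.2 ≤ u 2 → -v.1 ≤ u 3 →
      v.2 ≤ u 4 → v.1 + v.2 ≤ u 5 → v ∈ A := fun v h₀ h₁ h₂ h₃ h₄ h₅ =>
    Or.inl (mem_polygon_normalsTri.2 ⟨h₀, h₁, h₂, h₃, h₄, h₅⟩)
  have hx : y + (1, 0) ∈ bootstrapClosure nbhdTri 3 A := subset_bootstrapClosure A (Or.inr rfl)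
  have hN : (nbhdTri : Set (ℤ × ℤ)).Finite := nbhdTri.finite_toSet
  by_cases hzD : z ∈ polygon normalsTri u
  · exact subset_bootstrapClosure A (Or.inl hzD)
  rw [mem_polygon_normalsTri] at hzD
  -- `z` lies on the new column `z.1 = u 0 + 1` or on the new antidiagonal `z.1 + z.2 = u 5 + 1`
  by_cases hcol : z.1 = u 0 + 1
  · rcases le_or_gt z.2 y.2 with hle | hlt
    · have hline := add_nsmul_mem_bootstrapClosure hN (T := {(-1, 1), (-1, 0)}) (d := (0, -1))
        (by rw [Finset.coe_subset]; decide) (by decide) (by decide) hx (m := (y.2 - z.2).toNat)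
        fun j _ n hn => by
          fin_cases hn <;> apply hA <;> simp only [Prod.fst_add, Prod.snd_add, Prod.smul_mk,
            Int.nsmul_eq_mul] <;> omega
      convert hline using 1
      ext <;> simp only [Prod.fst_add, Prod.snd_add, Prod.smul_mk, Int.nsmul_eq_mul] <;> omega
    · have hline := add_nsmul_mem_bootstrapClosure hN (T := {(-1, 0), (-1, 1)}) (d := (0, 1))
        (by rw [Finset.coe_subset]; decide) (by decide) (by decide) hx (m := (z.2 - y.2).toNat)
        fun j _ n hn => by
          fin_cases hn <;> apply hA <;> simp only [Prod.fst_add, Prod.snd_add, Prod.smul_mk,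
            Int.nsmul_eq_mul] <;> omega
      convert hline using 1
      ext <;> simp only [Prod.fst_add, Prod.snd_add, Prod.smul_mk, Int.nsmul_eq_mul] <;> omega
  · rcases le_or_gt z.1 (y.1 + 1) with hle | hlt
    · have hline := add_nsmul_mem_bootstrapClosure hN (T := {(0, -1), (-1, 0)}) (d := (-1, 1))
        (by rw [Finset.coe_subset]; decide) (by decide) (by decide) hx
        (m := (y.1 + 1 - z.1).toNat)
        fun j _ n hn => by
          fin_cases hn <;> apply hA <;> simp only [Prod.fst_add, Prod.snd_add, Prod.smul_mk,
            Int.nsmul_eq_mul] <;> omega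
      convert hline using 1
      ext <;> simp only [Prod.fst_add, Prod.snd_add, Prod.smul_mk, Int.nsmul_eq_mul] <;> omega
    · have hline := add_nsmul_mem_bootstrapClosure hN (T := {(-1, 0), (0, -1)}) (d := (1, -1))
        (by rw [Finset.coe_subset]; decide) (by decide) (by decide) hx
        (m := (z.1 - y.1 - 1).toNat)
        fun j _ n hn => by
          fin_cases hn <;> apply hA <;> simp only [Prod.fst_add, Prod.snd_add, Prod.smul_mk,
            Int.nsmul_eq_mul] <;> omega
      convert hline using 1
      ext <;> simp only [Prod.fst_add, Prod.snd_add, Prod.smul_mk, Int.nsmul_eq_mul] <;> omega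

lemma grows_of_mem_nbhdTri {k : ℤ × ℤ} (hk : k ∈ nbhdTri) : Grows normalsTri nbhdTri 3 k := by
  obtain rfl | hk0 := eq_or_ne k 0
  · exact grows_zero
  obtain ⟨j, -, rfl⟩ : ∃ j ∈ Finset.range 6, rotTri^[j] (1, 0) = k := by
    revert k; decide
  exact grows_normalsTri_one_zero.iterate dot_normalsTri_rotTri rotTri_mem_nbhdTri j

end Triangular

section Plane

lemma pt_apply_zero (a b : ℝ) : pt a b 0 = a := rfl

lemma pt_apply_one (a b : ℝ) : pt a b 1 = b := rfl

lemma pt_add_pt (a b a' b' : ℝ) : pt a b + pt a' b' = pt (a + a') (b + b') := by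
  ext i; fin_cases i <;> rfl

lemma smul_pt (t a b : ℝ) : t • pt a b = pt (t * a) (t * b) := by
  ext i; fin_cases i <;> rfl

lemma inner_pt_pt (a b a' b' : ℝ) : (inner ℝ (pt a b) (pt a' b') : ℝ) = a * a' + b * b' := by
  simp [pt, PiLp.inner_apply, Fin.sum_univ_two, mul_comm]

def emb : ℤ × ℤ →+ E where
  toFun z := pt z.1 z.2
  map_zero' := by ext i; fin_cases i <;> simp [pt]
  map_add' a b := by simp [pt_add_pt]

lemma emb_apply (z : ℤ × ℤ) : emb z = pt z.1 z.2 := rfl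

lemma emb_injective : Function.Injective emb := by
  intro a b h
  have h0 := congrArg (· 0) h
  have h1 := congrArg (· 1) h
  simp only [emb_apply, pt_apply_zero, pt_apply_one, Int.cast_inj] at h0 h1
  exact Prod.ext h0 h1

lemma range_emb : range emb = latt := by
  ext x
  exact ⟨fun ⟨z, hz⟩ => ⟨z.1, z.2, hz.symm⟩, fun ⟨a, b, hx⟩ => ⟨(a, b), hx.symm⟩⟩

lemma inner_emb_emb (a b : ℤ × ℤ) : (inner ℝ (emb a) (emb b) : ℝ) = dot a b := by
  simp [emb_apply, inner_pt_pt, dot]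

lemma ncard_translate_inter_image_emb (N A : Set (ℤ × ℤ)) (z : ℤ × ℤ) :
    (((fun k => emb z + k) '' (emb '' N)) ∩ emb '' A).ncard = {n ∈ N | z + n ∈ A}.ncard := by
  have h : ((fun k => emb z + k) '' (emb '' N)) ∩ emb '' A =
      (fun n => emb (z + n)) '' {n ∈ N | z + n ∈ A} := by
    ext w
    simp only [image_image, ← map_add, mem_inter_iff, mem_image, mem_ofPred_eq]
    constructor
    · rintro ⟨⟨n, hn, rfl⟩, a, ha, hwa⟩
      exact ⟨n, ⟨hn, emb_injective hwa ▸ ha⟩, rfl⟩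
    · rintro ⟨n, ⟨hn, ha⟩, rfl⟩
      exact ⟨⟨n, hn, rfl⟩, _, ha, rfl⟩
  rw [h, ncard_image_of_injective _ fun a b hab => add_right_injective z (emb_injective hab)]

lemma step_image_emb (N : Set (ℤ × ℤ)) (r : ℕ) (A : Set (ℤ × ℤ)) :
    step (emb '' N) r (emb '' A) = emb '' bootstrapStep N r A := by
  ext x
  simp only [step, bootstrapStep, image_union, mem_union, ← range_emb]
  refine or_congr_right ⟨fun ⟨⟨z, hz⟩, hcount⟩ => ?_, fun ⟨z, hz, hzx⟩ => ?_⟩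
  · subst hz
    rw [ncard_translate_inter_image_emb] at hcount
    exact ⟨z, hcount, rfl⟩
  · subst hzx
    exact ⟨mem_range_self z, (ncard_translate_inter_image_emb N A z).symm ▸ hz⟩

lemma bpCl_image_emb (N : Set (ℤ × ℤ)) (r : ℕ) (A : Set (ℤ × ℤ)) :
    bpCl (emb '' N) r (emb '' A) = emb '' bootstrapClosure N r A := by
  rw [bpCl, bootstrapClosure, image_iUnion, ← range_emb, inter_eq_left.2 (image_subset_range _ _)]
  refine iUnion_congr fun t => ?_
  induction t with
  | zero => rfl
  | succ t ih => rw [Function.iterate_succ_apply', Function.iterate_succ_apply', ih, step_image_emb]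

end Plane

section Droplets

def droplet (S : Set E) (l : E → ℝ) : Set E :=
  latt ∩ ⋂ u ∈ S, {x : E | (inner ℝ x u : ℝ) ≤ l u}

noncomputable def unitDir (c : ℤ × ℤ) : E := ‖emb c‖⁻¹ • emb c

lemma norm_emb_pos {c : ℤ × ℤ} (hc : c ≠ 0) : 0 < ‖emb c‖ :=
  norm_pos_iff.2 fun h => hc (emb_injective (h.trans (map_zero emb).symm))

lemma inner_emb_unitDir (z c : ℤ × ℤ) :
    (inner ℝ (emb z) (unitDir c) : ℝ) = dot c z / ‖emb c‖ := by
  rw [unitDir, real_inner_smul_right, inner_emb_emb, dot_comm, inv_mul_eq_div]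

lemma unitDir_apply (c : ℤ × ℤ) :
    unitDir c = pt (c.1 / √(dot c c)) (c.2 / √(dot c c)) := by
  rw [unitDir, norm_eq_sqrt_real_inner, inner_emb_emb, emb_apply, smul_pt, inv_mul_eq_div,
    inv_mul_eq_div]

variable {ι : Type*} {c : ι → ℤ × ℤ}

lemma droplet_range_unitDir (hc : ∀ i, c i ≠ 0) (l : E → ℝ) :
    droplet (range (unitDir ∘ c)) l =
      emb '' polygon c (fun i => ⌊l (unitDir (c i)) * ‖emb (c i)‖⌋) := by
  have key : ∀ z, emb z ∈ ⋂ s ∈ range (unitDir ∘ c), {x : E | (inner ℝ x s : ℝ) ≤ l s} ↔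
      z ∈ polygon c (fun i => ⌊l (unitDir (c i)) * ‖emb (c i)‖⌋) := by
    intro z
    simp only [mem_iInter₂, mem_range, forall_exists_index, forall_apply_eq_imp_iff,
      Function.comp_apply, mem_ofPred_eq, inner_emb_unitDir, div_le_iff₀ (norm_emb_pos (hc _)),
      polygon, Int.le_floor]
  ext x
  constructor
  · rintro ⟨hx, hl⟩
    obtain ⟨z, rfl⟩ := range_emb ▸ hx
    exact ⟨z, (key z).1 hl, rfl⟩
  · rintro ⟨z, hz, rfl⟩
    exact ⟨range_emb ▸ mem_range_self z, (key z).2 hz⟩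

lemma IsDropletS.exists_eq_image_polygon (hc : ∀ i, c i ≠ 0) {D : Set E}
    (hD : IsDropletS (range (unitDir ∘ c)) D) : ∃ u, D = emb '' polygon c u :=
  let ⟨l, hl⟩ := hD
  ⟨_, hl.trans (droplet_range_unitDir hc l)⟩

lemma isDropletS_image_polygon (hc : ∀ i, c i ≠ 0) {u : ι → ℤ}
    (h : (polygon c u).Nonempty) :
    IsDropletS (range (unitDir ∘ c)) (emb '' polygon c u) := by
  obtain ⟨v, hv, hvu⟩ := exists_isTight_polygon_eq h
  rw [← hvu]
  -- radii: the support function, which a tight polygon attains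
  refine ⟨fun s => sSup ((fun x => (inner ℝ x s : ℝ)) '' (emb '' polygon c v)), ?_⟩
  change _ = droplet _ _
  rw [droplet_range_unitDir hc]
  congr 2 with i
  have hsup : IsGreatest ((fun x => (inner ℝ x (unitDir (c i)) : ℝ)) '' (emb '' polygon c v))
      (v i / ‖emb (c i)‖) := by
    obtain ⟨z, hz, hzi⟩ := hv i
    refine ⟨⟨emb z, mem_image_of_mem _ hz, by simp [inner_emb_unitDir, hzi]⟩, ?_⟩
    rintro _ ⟨_, ⟨w, hw, rfl⟩, rfl⟩
    simp only [inner_emb_unitDir]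
    gcongr
    exact_mod_cast hw i
  rw [hsup.csSup_eq, div_mul_cancel₀ _ (norm_emb_pos (hc i)).ne', Int.floor_intCast]

end Droplets

section Main

variable {ι : Type*} {c : ι → ℤ × ℤ} {N : Set (ℤ × ℤ)} {r : ℕ}

theorem bpCl_union_eq_of_grows (hc : ∀ i, c i ≠ 0) (hN : N.Finite)
    (hstable : ∀ i, {n ∈ N | dot (c i) n < 0}.ncard < r) (hgrows : ∀ k ∈ N, Grows c N r k)
    {D D' : Set E} (hD : IsDropletS (range (unitDir ∘ c)) D) {x y : E} (hy : y ∈ D)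
    (hx : x ∈ latt) (hnb : x - y ∈ emb '' N) (hD' : IsDropletS (range (unitDir ∘ c)) D')
    (hsub : D ∪ {x} ⊆ D')
    (hmin : ∀ D'', IsDropletS (range (unitDir ∘ c)) D'' → D ∪ {x} ⊆ D'' → D' ⊆ D'') :
    bpCl (emb '' N) r (D ∪ {x}) = D' := by
  obtain ⟨u₀, rfl⟩ := hD.exists_eq_image_polygon hc
  obtain ⟨v, rfl⟩ := hD'.exists_eq_image_polygon hc
  obtain ⟨y, hy, rfl⟩ := hy
  obtain ⟨x, rfl⟩ := range_emb ▸ hx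
  obtain ⟨k, hk, hxk⟩ := hnb
  obtain rfl : x = y + k := emb_injective (by rw [map_add, hxk, add_sub_cancel])
  obtain ⟨u, hu, hpoly⟩ := exists_isTight_polygon_eq ⟨y, hy⟩
  rw [← hpoly] at hsub hmin hy ⊢
  rw [← image_singleton, ← image_union] at hsub hmin ⊢
  rw [bpCl_image_emb]
  refine subset_antisymm (image_mono ?_) ?_
  · exact bootstrapClosure_subset hN (bootstrapStep_polygon_subset hstable hN v)
      ((image_subset_image_iff emb_injective).1 hsub)
  · have hw : polygon c u ∪ {y + k} ⊆ polygon c fun i => max (u i) (dot (c i) (y + k)) :=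
      union_subset (polygon_mono fun _ => le_max_left _ _)
        (singleton_subset_iff.2 fun _ => le_max_right _ _)
    exact (hmin _ (isDropletS_image_polygon hc ⟨y + k, hw (Or.inr rfl)⟩) (image_mono hw)).trans
      (image_mono (hgrows k hk u y hu hy))

end Main

lemma Ksq_eq_image : Ksq = emb '' nbhdSq := by
  simp [Ksq, nbhdSq, emb_apply, image_insert_eq]

lemma Ktri_eq_image : Ktri = emb '' nbhdTri := by
  ext
  simp [Ktri, Ksq, nbhdTri, emb_apply, image_insert_eq, or_comm, or_left_comm]

lemma Ssq_eq_range : Ssq = range (unitDir ∘ normalsSq) := by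
  ext
  simp [Ssq, range_comp, normalsSq, Matrix.range_cons, unitDir_apply, dot, image_insert_eq,
    or_comm, or_left_comm]

lemma Stri_eq_range : Stri = range (unitDir ∘ normalsTri) := by
  ext
  simp [Stri, Ssq, range_comp, normalsTri, Matrix.range_cons, unitDir_apply, dot, image_insert_eq,
    one_add_one_eq_two, neg_div, or_comm, or_left_comm]

theorem statement_3_general (𝒦 S : Set E) (r : ℕ)
    (hmod : (𝒦 = Ksq ∧ r = 2 ∧ S = Ssq) ∨ (𝒦 = Ktri ∧ r = 3 ∧ S = Stri))
    (D D' : Set E) (hD : IsDropletS S D) (y : E) (hy : y ∈ D)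
    (x : E) (hx : x ∈ latt) (hnb : x - y ∈ 𝒦)
    (hD' : IsDropletS S D') (hsub : D ∪ {x} ⊆ D')
    (hmin : ∀ D'' : Set E, IsDropletS S D'' → D ∪ {x} ⊆ D'' → D' ⊆ D'') :
    bpCl 𝒦 r (D ∪ {x}) = D' := by
  rcases hmod with ⟨rfl, rfl, rfl⟩ | ⟨rfl, rfl, rfl⟩
  · rw [Ksq_eq_image, Ssq_eq_range] at *
    exact bpCl_union_eq_of_grows (by decide) nbhdSq.finite_toSet ncard_nbhdSq_neg
      (fun _ => grows_of_mem_nbhdSq) hD hy hx hnb hD' hsub hmin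
  · rw [Ktri_eq_image, Stri_eq_range] at *
    exact bpCl_union_eq_of_grows (by decide) nbhdTri.finite_toSet ncard_nbhdTri_neg
      (fun _ => grows_of_mem_nbhdTri) hD hy hx hnb hD' hsub hmin

theorem statement_3 (𝒦 S : Set E) (r : ℕ)
    (hmod : (𝒦 = Ksq ∧ r = 2 ∧ S = Ssq) ∨ (𝒦 = Ktri ∧ r = 3 ∧ S = Stri))
    (D D' : Set E) (hD : IsDropletS S D) (y : E) (hy : y ∈ D)
    (x : E) (hx : x ∈ latt) (hxy : x ≠ y) (hnb : x - y ∈ 𝒦)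
    (hD' : IsDropletS S D') (hsub : D ∪ {x} ⊆ D')
    (hmin : ∀ D'' : Set E, IsDropletS S D'' → D ∪ {x} ⊆ D'' → D' ⊆ D'') :
    bpCl 𝒦 r (D ∪ {x}) = D' :=
  statement_3_general 𝒦 S r hmod D D' hD y hy x hx hnb hD' hsub hmin
end

section
/- Work with constants 1 ≪ C₆ ≪ C₅ ≪ C₄ ≪ C₃ ≪ C₂ (each sufficiently large in terms of those to its left) and s sufficiently large in terms of all of them. Let P be a fat horizontal convex set of area at least (C₂s)². Then P has an admissible vertical chord. -/
open Set MeasureTheory Filter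
open scoped RealInnerProductSpace Pointwise ENNReal

/-
Since `P` is horizontal, its area is at most `(x₊ - x₋)²`, so `P` has width at least `C₂ s`.
Over the middle third of `P` the height is at most the width, so the boundary slopes are at most
`4` in absolute value and every tangent angle there lies in `[-4π/9, 4π/9]`. Place
`N > 2 (π C₃ + 1)` disjoint windows `[a - C₄ s, a + C₄ s]` in the middle third. Along the upper
boundary the tangent angle is non-increasing with values in an interval of length `π`, so it drops
by more than `1/C₃` across at most `π C₃ + 1` of the windows; likewise for the (non-decreasing)
lower tangent angle. Some window escapes both, and the vertical chord through its centre is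
admissible.
-/

open Real Bornology

lemma natCast_card_le_of_forall_add_le {S : Finset ℕ} {g : ℕ → ℝ} {a b d : ℝ} (hd : 0 < d)
    (hab : a ≤ b) (hg : ∀ i ∈ S, ∀ j ∈ S, i < j → g j + d ≤ g i)
    (hmem : ∀ i ∈ S, g i ∈ Icc a b) : (S.card : ℝ) ≤ (b - a) / d + 1 := by
  set k : ℕ → ℕ := fun i => ⌊(b - g i) / d⌋₊
  have hk : StrictMonoOn k S := by
    intro i hi j hj hij
    have h0 : 0 ≤ (b - g i) / d := div_nonneg (sub_nonneg.2 (hmem i hi).2) hd.le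
    have h1 : (b - g i) / d + 1 ≤ (b - g j) / d := by
      rw [div_add_one hd.ne', div_le_div_iff_of_pos_right hd]
      linarith [hg i hi j hj hij]
    calc k i < ⌊(b - g i) / d⌋₊ + 1 := Nat.lt_succ_self _
      _ = ⌊(b - g i) / d + 1⌋₊ := (Nat.floor_add_one h0).symm
      _ ≤ k j := Nat.floor_le_floor h1
  have hmaps : ∀ i ∈ S, k i ∈ Finset.range (⌊(b - a) / d⌋₊ + 1) := fun i hi =>
    Finset.mem_range_succ_iff.2 <| Nat.floor_le_floor <|
      div_le_div_of_nonneg_right (by linarith [(hmem i hi).1]) hd.le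
  have hcard := Finset.card_le_card_of_injOn k hmaps hk.injOn
  rw [Finset.card_range] at hcard
  calc (S.card : ℝ) ≤ (⌊(b - a) / d⌋₊ : ℝ) + 1 := by exact_mod_cast hcard
    _ ≤ (b - a) / d + 1 := by
      gcongr
      exact Nat.floor_le (div_nonneg (sub_nonneg.2 hab) hd.le)

lemma four_le_tan_four_mul_pi_div_nine : 4 ≤ tan (4 * π / 9) := by
  have hsin_pos : 0 < sin (π / 18) := sin_pos_of_pos_of_lt_pi (by positivity) (by linarith [pi_pos])
  have hsin : sin (π / 18) ≤ π / 18 := sin_le (by positivity)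
  have hcos : 1 - (π / 18) ^ 2 / 2 ≤ cos (π / 18) := one_sub_sq_div_two_le_cos
  rw [show 4 * π / 9 = π / 2 - π / 18 by ring, tan_eq_sin_div_cos, sin_pi_div_two_sub,
    cos_pi_div_two_sub, le_div_iff₀ hsin_pos]
  nlinarith [pi_lt_d2, pi_pos]

lemma abs_arctan_le_of_abs_le_four {m : ℝ} (hm : |m| ≤ 4) : |arctan m| ≤ 4 * π / 9 := by
  have harctan_four : arctan 4 ≤ 4 * π / 9 :=
    calc arctan 4 ≤ arctan (tan (4 * π / 9)) :=
          arctan_strictMono.monotone four_le_tan_four_mul_pi_div_nine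
      _ = 4 * π / 9 := arctan_tan (by linarith [pi_pos]) (by linarith [pi_pos])
  obtain ⟨hlo, hhi⟩ := abs_le.1 hm
  have hneg := arctan_strictMono.monotone hlo
  rw [arctan_neg] at hneg
  exact abs_le.2 ⟨by linarith, by linarith [arctan_strictMono.monotone hhi]⟩

lemma volume_setOf_coord_mem_Icc (a b c d : ℝ) :
    volume {x : E | x 0 ∈ Icc a b ∧ x 1 ∈ Icc c d} =
      ENNReal.ofReal (b - a) * ENNReal.ofReal (d - c) := by
  have hmp := EuclideanSpace.volume_preserving_symm_measurableEquiv_toLp (Fin 2)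
  have hset : {x : E | x 0 ∈ Icc a b ∧ x 1 ∈ Icc c d} =
      (MeasurableEquiv.toLp 2 (Fin 2 → ℝ)).symm ⁻¹' (Set.univ.pi ![Icc a b, Icc c d]) := by
    ext x
    simp [Fin.forall_fin_two]
  rw [hset, hmp.measure_preimage ((MeasurableSet.univ_pi fun i => by
    fin_cases i <;> exact measurableSet_Icc).nullMeasurableSet), volume_pi_pi, Fin.prod_univ_two]
  simp [Real.volume_Icc]

lemma pt_coord (x : E) : pt (x 0) (x 1) = x := by
  ext i; fin_cases i <;> rfl

section Chords

variable {P : Set E}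

lemma coord_mem_Icc_xmin_xmax (hbd : IsBounded P) {p : E} (hp : p ∈ P) :
    p 0 ∈ Icc (xmin P) (xmax P) :=
  have hb := ((EuclideanSpace.proj (0 : Fin 2) : E →L[ℝ] ℝ).lipschitz.isBounded_image hbd)
  ⟨csInf_le hb.bddBelow ⟨p, hp, rfl⟩, le_csSup hb.bddAbove ⟨p, hp, rfl⟩⟩

lemma coord_mem_Icc_ymin_ymax (hbd : IsBounded P) {p : E} (hp : p ∈ P) :
    p 1 ∈ Icc (ymin P) (ymax P) :=
  have hb := ((EuclideanSpace.proj (1 : Fin 2) : E →L[ℝ] ℝ).lipschitz.isBounded_image hbd)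
  ⟨csInf_le hb.bddBelow ⟨p, hp, rfl⟩, le_csSup hb.bddAbove ⟨p, hp, rfl⟩⟩

lemma volume_toReal_le_width_mul_height (hbd : IsBounded P) :
    (volume P).toReal ≤ (xmax P - xmin P) * (ymax P - ymin P) := by
  rcases P.eq_empty_or_nonempty with rfl | ⟨p, hp⟩
  · simp [xmin, xmax, ymin, ymax]
  have hx := coord_mem_Icc_xmin_xmax hbd hp
  have hy := coord_mem_Icc_ymin_ymax hbd hp
  have hsub : P ⊆ {x : E | x 0 ∈ Icc (xmin P) (xmax P) ∧ x 1 ∈ Icc (ymin P) (ymax P)} :=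
    fun x hx => ⟨coord_mem_Icc_xmin_xmax hbd hx, coord_mem_Icc_ymin_ymax hbd hx⟩
  have hle := ENNReal.toReal_mono (by rw [volume_setOf_coord_mem_Icc]; finiteness)
    (measure_mono (μ := volume) hsub)
  rwa [volume_setOf_coord_mem_Icc, ENNReal.toReal_mul, ENNReal.toReal_ofReal (by linarith [hx.1, hx.2]),
    ENNReal.toReal_ofReal (by linarith [hy.1, hy.2])] at hle

lemma le_width_of_sq_le_volume (hbd : IsBounded P) (hhor : IsHorizontal P) {c : ℝ} (hc : 0 < c)
    (harea : c ^ 2 ≤ (volume P).toReal) : c ≤ xmax P - xmin P := by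
  obtain ⟨p, hp⟩ : P.Nonempty := nonempty_of_measure_ne_zero fun h => by
    rw [h, ENNReal.toReal_zero] at harea
    nlinarith
  have hy := coord_mem_Icc_ymin_ymax hbd hp
  have hWH := volume_toReal_le_width_mul_height hbd
  unfold IsHorizontal at hhor
  nlinarith [hy.1, hy.2]

lemma exists_pt_mem_of_xmin_lt_of_lt_xmax (hconv : Convex ℝ P) {a : ℝ} (hl : xmin P < a)
    (hr : a < xmax P) : ∃ y, pt a y ∈ P := by
  have hne : P.Nonempty := by
    by_contra h
    simp [not_nonempty_iff_eq_empty.1 h, xmin, xmax] at hl hr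
    linarith
  have hI : ((fun p : E => p 0) '' P).OrdConnected :=
    (hconv.linear_image (EuclideanSpace.proj (0 : Fin 2) : E →L[ℝ] ℝ).toLinearMap).ordConnected
  obtain ⟨_, hx₁, hx₁a⟩ := exists_lt_of_csInf_lt (hne.image _) hl
  obtain ⟨_, hx₂, hax₂⟩ := exists_lt_of_lt_csSup (hne.image _) hr
  obtain ⟨p, hp, rfl⟩ := hI.out hx₁ hx₂ ⟨hx₁a.le, hax₂.le⟩
  exact ⟨p 1, by rwa [pt_coord]⟩

lemma exists_chord_lt_of_xmin_lt (hne : P.Nonempty) {c : ℝ} (hc : xmin P < c) :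
    ∃ t < c, {y : ℝ | pt t y ∈ P}.Nonempty := by
  obtain ⟨_, ⟨p, hp, rfl⟩, hpc⟩ := exists_lt_of_csInf_lt (hne.image fun p : E => p 0) hc
  exact ⟨p 0, hpc, p 1, show pt (p 0) (p 1) ∈ P by rwa [pt_coord]⟩

lemma exists_chord_gt_of_lt_xmax (hne : P.Nonempty) {c : ℝ} (hc : c < xmax P) :
    ∃ t > c, {y : ℝ | pt t y ∈ P}.Nonempty := by
  obtain ⟨_, ⟨p, hp, rfl⟩, hpc⟩ := exists_lt_of_lt_csSup (hne.image fun p : E => p 0) hc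
  exact ⟨p 0, hpc, p 1, show pt (p 0) (p 1) ∈ P by rwa [pt_coord]⟩

lemma upperF_mem_Icc (hbd : IsBounded P) {a : ℝ} (ha : {y : ℝ | pt a y ∈ P}.Nonempty) :
    upperF P a ∈ Icc (ymin P) (ymax P) := by
  obtain ⟨y₀, hy₀⟩ := ha
  have hbdd : ∀ y ∈ {y : ℝ | pt a y ∈ P}, y ∈ Icc (ymin P) (ymax P) := fun y hy =>
    coord_mem_Icc_ymin_ymax hbd hy
  exact ⟨(hbdd y₀ hy₀).1.trans (le_csSup ⟨ymax P, fun y hy => (hbdd y hy).2⟩ hy₀),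
    csSup_le ⟨y₀, hy₀⟩ fun y hy => (hbdd y hy).2⟩

lemma lowerF_mem_Icc (hbd : IsBounded P) {a : ℝ} (ha : {y : ℝ | pt a y ∈ P}.Nonempty) :
    lowerF P a ∈ Icc (ymin P) (ymax P) := by
  obtain ⟨y₀, hy₀⟩ := ha
  have hbdd : ∀ y ∈ {y : ℝ | pt a y ∈ P}, y ∈ Icc (ymin P) (ymax P) := fun y hy =>
    coord_mem_Icc_ymin_ymax hbd hy
  exact ⟨le_csInf ⟨y₀, hy₀⟩ fun y hy => (hbdd y hy).1,
    (csInf_le ⟨ymin P, fun y hy => (hbdd y hy).1⟩ hy₀).trans (hbdd y₀ hy₀).2⟩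

lemma le_of_mem_upperSlopes_of_lt {x y m₁ m₂ : ℝ} (hxy : x < y)
    (hx : {z : ℝ | pt x z ∈ P}.Nonempty) (hy : {z : ℝ | pt y z ∈ P}.Nonempty)
    (h₁ : m₁ ∈ upperSlopes P x) (h₂ : m₂ ∈ upperSlopes P y) : m₂ ≤ m₁ := by
  nlinarith [h₁ y hy, h₂ x hx]

lemma le_of_mem_lowerSlopes_of_lt {x y m₁ m₂ : ℝ} (hxy : x < y)
    (hx : {z : ℝ | pt x z ∈ P}.Nonempty) (hy : {z : ℝ | pt y z ∈ P}.Nonempty)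
    (h₁ : m₁ ∈ lowerSlopes P x) (h₂ : m₂ ∈ lowerSlopes P y) : m₁ ≤ m₂ := by
  nlinarith [h₁ y hy, h₂ x hx]

lemma abs_mul_le_of_mem_upperSlopes (hbd : IsBounded P) {a D m : ℝ}
    (ha : {y : ℝ | pt a y ∈ P}.Nonempty) (hl : xmin P + D < a) (hr : a + D < xmax P)
    (hm : m ∈ upperSlopes P a) : |m| * D ≤ ymax P - ymin P := by
  have hne : P.Nonempty := ⟨_, ha.some_mem⟩
  obtain ⟨t₁, ht₁, hc₁⟩ := exists_chord_lt_of_xmin_lt hne (c := a - D) (by linarith)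
  obtain ⟨t₂, ht₂, hc₂⟩ := exists_chord_gt_of_lt_xmax hne (c := a + D) (by linarith)
  have hfa := upperF_mem_Icc hbd ha
  have hf₁ := upperF_mem_Icc hbd hc₁
  have hf₂ := upperF_mem_Icc hbd hc₂
  rcases le_or_gt 0 m with hm0 | hm0
  · rw [abs_of_nonneg hm0]
    nlinarith [hm t₁ hc₁, hfa.2, hf₁.1]
  · rw [abs_of_neg hm0]
    nlinarith [hm t₂ hc₂, hfa.2, hf₂.1]

lemma abs_mul_le_of_mem_lowerSlopes (hbd : IsBounded P) {a D m : ℝ}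
    (ha : {y : ℝ | pt a y ∈ P}.Nonempty) (hl : xmin P + D < a) (hr : a + D < xmax P)
    (hm : m ∈ lowerSlopes P a) : |m| * D ≤ ymax P - ymin P := by
  have hne : P.Nonempty := ⟨_, ha.some_mem⟩
  obtain ⟨t₁, ht₁, hc₁⟩ := exists_chord_lt_of_xmin_lt hne (c := a - D) (by linarith)
  obtain ⟨t₂, ht₂, hc₂⟩ := exists_chord_gt_of_lt_xmax hne (c := a + D) (by linarith)
  have hfa := lowerF_mem_Icc hbd ha
  have hf₁ := lowerF_mem_Icc hbd hc₁
  have hf₂ := lowerF_mem_Icc hbd hc₂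
  rcases le_or_gt 0 m with hm0 | hm0
  · rw [abs_of_nonneg hm0]
    nlinarith [hm t₂ hc₂, hfa.1, hf₂.2]
  · rw [abs_of_neg hm0]
    nlinarith [hm t₁ hc₁, hfa.1, hf₁.2]

lemma natCast_card_le_of_upperSlopes_jump {S : Finset ℕ} {l r : ℕ → ℝ} {d : ℝ} (hd : 0 < d)
    (hlr : ∀ i ∈ S, ∀ j ∈ S, i < j → r i < l j)
    (hl : ∀ i ∈ S, {y : ℝ | pt (l i) y ∈ P}.Nonempty)
    (hr : ∀ i ∈ S, {y : ℝ | pt (r i) y ∈ P}.Nonempty)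
    (hjump : ∀ i ∈ S, ∃ m₁ ∈ upperSlopes P (l i), ∃ m₂ ∈ upperSlopes P (r i),
      d < arctan m₁ - arctan m₂) :
    (S.card : ℝ) ≤ π / d + 1 := by
  choose! m₁ hm₁ m₂ hm₂ hgap using hjump
  have hcard := natCast_card_le_of_forall_add_le (S := S) (g := fun i => arctan (m₂ i))
    (a := -(π / 2)) (b := π / 2) hd (by linarith [pi_pos]) (fun i hi j hj hij => ?_)
    (fun i _ => ⟨(neg_pi_div_two_lt_arctan _).le, (arctan_lt_pi_div_two _).le⟩)
  · rwa [sub_neg_eq_add, add_halves] at hcard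
  · have hmono := arctan_strictMono.monotone <| le_of_mem_upperSlopes_of_lt
      (hlr i hi j hj hij) (hr i hi) (hl j hj) (hm₂ i hi) (hm₁ j hj)
    linarith [hgap j hj]

lemma natCast_card_le_of_lowerSlopes_jump {S : Finset ℕ} {l r : ℕ → ℝ} {d : ℝ} (hd : 0 < d)
    (hlr : ∀ i ∈ S, ∀ j ∈ S, i < j → r i < l j)
    (hl : ∀ i ∈ S, {y : ℝ | pt (l i) y ∈ P}.Nonempty)
    (hr : ∀ i ∈ S, {y : ℝ | pt (r i) y ∈ P}.Nonempty)
    (hjump : ∀ i ∈ S, ∃ m₁ ∈ lowerSlopes P (l i), ∃ m₂ ∈ lowerSlopes P (r i),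
      d < arctan m₂ - arctan m₁) :
    (S.card : ℝ) ≤ π / d + 1 := by
  choose! m₁ hm₁ m₂ hm₂ hgap using hjump
  have hcard := natCast_card_le_of_forall_add_le (S := S) (g := fun i => -arctan (m₂ i))
    (a := -(π / 2)) (b := π / 2) hd (by linarith [pi_pos]) (fun i hi j hj hij => ?_)
    (fun i _ => ⟨by linarith [arctan_lt_pi_div_two (m₂ i)],
      by linarith [neg_pi_div_two_lt_arctan (m₂ i)]⟩)
  · rwa [sub_neg_eq_add, add_halves] at hcard
  · have hmono := arctan_strictMono.monotone <| le_of_mem_lowerSlopes_of_lt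
      (hlr i hi j hj hij) (hr i hi) (hl j hj) (hm₂ i hi) (hm₁ j hj)
    linarith [hgap j hj]

lemma isAdmissible_of_mem_middle_third (hconv : Convex ℝ P) (hbd : IsBounded P)
    (hhor : IsHorizontal P) {C₃ C₄ s a : ℝ} (hδ : 0 < C₄ * s)
    (hl : xmin P + (xmax P - xmin P) / 3 ≤ a - C₄ * s)
    (hr : a + C₄ * s ≤ xmax P - (xmax P - xmin P) / 3)
    (hU : ∀ m₁ ∈ upperSlopes P (a - C₄ * s), ∀ m₂ ∈ upperSlopes P (a + C₄ * s),
      arctan m₁ - arctan m₂ ≤ 1 / C₃)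
    (hL : ∀ m₁ ∈ lowerSlopes P (a - C₄ * s), ∀ m₂ ∈ lowerSlopes P (a + C₄ * s),
      arctan m₂ - arctan m₁ ≤ 1 / C₃) :
    IsAdmissible C₃ C₄ s P a := by
  set W := xmax P - xmin P
  have hW : 0 < W := by linarith
  have ha := exists_pt_mem_of_xmin_lt_of_lt_xmax hconv (a := a) (by linarith) (by linarith)
  have hangle : ∀ m : ℝ, |m| * (W / 4) ≤ ymax P - ymin P → |arctan m| ≤ 4 * π / 9 :=
    fun m hm => abs_arctan_le_of_abs_le_four <| by unfold IsHorizontal at hhor; nlinarith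
  exact ⟨by linarith, by linarith, ha,
    fun m hm => hangle m (abs_mul_le_of_mem_upperSlopes hbd ha (by linarith) (by linarith) hm),
    fun m hm => hangle m (abs_mul_le_of_mem_lowerSlopes hbd ha (by linarith) (by linarith) hm),
    hU, hL⟩

theorem exists_isAdmissible_of_le_width (hconv : Convex ℝ P) (hbd : IsBounded P)
    (hhor : IsHorizontal P) {C₃ C₄ s : ℝ} (hC₃ : 0 < C₃) (hδ : 0 < C₄ * s) {N : ℕ}
    (hN : 2 * (π * C₃ + 1) < N) (hwidth : 9 * N * (C₄ * s) ≤ xmax P - xmin P) :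
    ∃ a, IsAdmissible C₃ C₄ s P a := by
  classical
  set δ := C₄ * s
  set W := xmax P - xmin P
  -- the windows `[b i - δ, b i + δ]`, `i < N`, tile the middle third with gaps `δ`
  set b : ℕ → ℝ := fun i => xmin P + W / 3 + (3 * i + 2) * δ
  have hNpos : (0 : ℝ) < N := by linarith [mul_pos pi_pos hC₃]
  have hmiddle : ∀ i ∈ Finset.range N, xmin P + W / 3 ≤ b i - δ ∧ b i + δ ≤ xmax P - W / 3 := by
    intro i hi
    have hiN : (i : ℝ) + 1 ≤ N := by exact_mod_cast Finset.mem_range.1 hi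
    simp only [b]
    constructor <;> nlinarith
  have hchord : ∀ i ∈ Finset.range N,
      {y : ℝ | pt (b i - δ) y ∈ P}.Nonempty ∧ {y : ℝ | pt (b i + δ) y ∈ P}.Nonempty := by
    intro i hi
    have hW : 0 < W := by nlinarith
    obtain ⟨hl, hr⟩ := hmiddle i hi
    exact ⟨exists_pt_mem_of_xmin_lt_of_lt_xmax hconv (by linarith) (by linarith),
      exists_pt_mem_of_xmin_lt_of_lt_xmax hconv (by linarith) (by linarith)⟩
  have hsep : ∀ i j : ℕ, i < j → b i + δ < b j - δ := by
    intro i j hij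
    have hij' : (i : ℝ) + 1 ≤ j := by exact_mod_cast hij
    simp only [b]
    nlinarith
  by_contra! hno
  set SU := (Finset.range N).filter fun i => ∃ m₁ ∈ upperSlopes P (b i - δ),
    ∃ m₂ ∈ upperSlopes P (b i + δ), 1 / C₃ < arctan m₁ - arctan m₂
  set SL := (Finset.range N).filter fun i => ∃ m₁ ∈ lowerSlopes P (b i - δ),
    ∃ m₂ ∈ lowerSlopes P (b i + δ), 1 / C₃ < arctan m₂ - arctan m₁
  have hcover : Finset.range N ⊆ SU ∪ SL := by
    intro i hi
    by_contra hiSUL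
    simp only [SU, SL, Finset.mem_union, Finset.mem_filter, not_or, not_and, not_exists,
      not_lt] at hiSUL
    exact hno (b i) (isAdmissible_of_mem_middle_third hconv hbd hhor hδ (hmiddle i hi).1
      (hmiddle i hi).2 (hiSUL.1 hi) (hiSUL.2 hi))
  have hU := natCast_card_le_of_upperSlopes_jump (S := SU) (one_div_pos.2 hC₃)
    (fun i _ j _ hij => hsep i j hij) (fun i hi => (hchord i (Finset.filter_subset _ _ hi)).1)
    (fun i hi => (hchord i (Finset.filter_subset _ _ hi)).2) fun i hi => (Finset.mem_filter.1 hi).2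
  have hL := natCast_card_le_of_lowerSlopes_jump (S := SL) (one_div_pos.2 hC₃)
    (fun i _ j _ hij => hsep i j hij) (fun i hi => (hchord i (Finset.filter_subset _ _ hi)).1)
    (fun i hi => (hchord i (Finset.filter_subset _ _ hi)).2) fun i hi => (Finset.mem_filter.1 hi).2
  have hcard : (N : ℝ) ≤ SU.card + SL.card := by
    exact_mod_cast (Finset.card_range N).symm.trans_le
      ((Finset.card_le_card hcover).trans (Finset.card_union_le _ _))
  rw [div_div_eq_mul_div, div_one] at hU hL
  linarith

end Chords

theorem statement_9 :
    ∃ c₆ : ℝ, ∀ C₆ : ℝ, c₆ ≤ C₆ → ∃ c₅ : ℝ, ∀ C₅ : ℝ, c₅ ≤ C₅ →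
    ∃ c₄ : ℝ, ∀ C₄ : ℝ, c₄ ≤ C₄ → ∃ c₃ : ℝ, ∀ C₃ : ℝ, c₃ ≤ C₃ →
    ∃ c₂ : ℝ, ∀ C₂ : ℝ, c₂ ≤ C₂ → ∃ s₀ : ℝ, ∀ s : ℝ, s₀ ≤ s →
      ∀ P : Set E, IsFat (C₅ * s) P → IsHorizontal P →
        (C₂ * s) ^ 2 ≤ (volume P).toReal →
        ∃ a : ℝ, IsAdmissible C₃ C₄ s P a := by
  refine ⟨0, fun _ _ => ⟨0, fun _ _ => ⟨1, fun C₄ hC₄ => ⟨1, fun C₃ hC₃ =>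
    ⟨9 * (⌊2 * π * C₃⌋₊ + 3 : ℕ) * C₄, fun C₂ hC₂ => ⟨1, fun s hs P hfat hhor harea => ?_⟩⟩⟩⟩⟩⟩
  obtain ⟨hconv, hbd, -, -⟩ := hfat
  have hN : 2 * (π * C₃ + 1) < (⌊2 * π * C₃⌋₊ + 3 : ℕ) := by
    push_cast
    linarith [Nat.lt_floor_add_one (2 * π * C₃)]
  have hs₀ : 0 < s := by linarith
  have hδ : 0 < C₄ * s := mul_pos (by linarith) hs₀
  have hC₂pos : 0 < C₂ := lt_of_lt_of_le (by positivity) hC₂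
  have hwidth := le_width_of_sq_le_volume hbd hhor (mul_pos hC₂pos hs₀) harea
  refine exists_isAdmissible_of_le_width hconv hbd hhor (by linarith) hδ hN ?_
  calc _ = 9 * (⌊2 * π * C₃⌋₊ + 3 : ℕ) * C₄ * s := by ring
    _ ≤ C₂ * s := by gcongr
    _ ≤ _ := hwidth
end
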